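/- (Inversion is an isometry of the model metric and preserves the solid cone) The inversion f is an involution of ℝⁿ\{0} (f∘f = id); it maps C_{d,h}\{0} onto C_{d,h}\{0} and ℝ^d₊\{0} onto ℝ^d₊\{0}, hence it maps C_{d,h} \ ℝ^d₊ bijectively onto itself. Moreover, for every x ∈ ℝⁿ with ρ(x) > 0 one has ρ(f(x)) = ρ(x)/|x|² > 0, f is differentiable at x, and for all v, w ∈ ℝⁿ, ρ(f(x))⁻² ⟨Df(x)v, Df(x)w⟩ = ρ(x)⁻² ⟨v, w⟩, where Df(x) is the Fréchet derivative of f at x and ⟨·,·⟩ is the Euclidean inner product; that is, f is an isometry of the Riemannian metric g = ρ⁻² δ on {ρ > 0}. -/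

import Mathlib

open MeasureTheory Set Finset RealInnerProductSpace
open scoped ENNReal NNReal

noncomputable section

/-- `ℝⁿ` with the Euclidean inner product. -/
abbrev Spc (n : ℕ) : Type := EuclideanSpace ℝ (Fin n)

/-- `ρ(x) = (x_{d+1}² + ⋯ + x_n²)^{1/2}`; in 0-indexed coordinates these are the
coordinates with index `≥ d`. -/
def rho (n d : ℕ) (x : Spc n) : ℝ :=
  Real.sqrt (∑ i ∈ Finset.univ.filter (fun i : Fin n => d ≤ (i : ℕ)), x i ^ 2)

/-- The generalized solid cone `C_{d,h} = {x ∈ ℝⁿ : x₁ ≥ h ρ(x)}`. -/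
def Cone (n d : ℕ) (hn : 0 < n) (h : ℝ) : Set (Spc n) :=
  {x | h * rho n d x ≤ x ⟨0, hn⟩}

/-- The singular set `ℝ^d₊ = {x ∈ ℝⁿ : x₁ ≥ 0, x_{d+1} = ⋯ = x_n = 0}`. -/
def Rdplus (n d : ℕ) (hn : 0 < n) : Set (Spc n) :=
  {x | 0 ≤ x ⟨0, hn⟩ ∧ ∀ i : Fin n, d ≤ (i : ℕ) → x i = 0}

/-- The inversion `f(x) = x / |x|²`. -/
def finv {n : ℕ} (x : Spc n) : Spc n := (‖x‖ ^ 2)⁻¹ • x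

/-!
The map `finv` is Mathlib's inversion in the unit sphere about the origin, an involution whose
derivative at `x` is `‖x‖⁻²` times a reflection, so it is conformal with factor `‖x‖⁻⁴` on
inner products. Since `finv x` is a positive multiple of `x`, it preserves every set invariant
under positive scalings, such as `C_{d,h}` and `ℝ^d₊`, and scales `ρ` by the same factor
`‖x‖⁻²`; as `ρ` is squared in `g = ρ⁻² δ`, the two factors cancel.
-/

lemma finv_eq_inversion {n : ℕ} : finv (n := n) = EuclideanGeometry.inversion 0 1 := by
  funext x
  simp [finv, EuclideanGeometry.inversion, dist_eq_norm]

lemma finv_involutive {n : ℕ} : Function.Involutive (finv (n := n)) := by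
  rw [finv_eq_inversion]
  exact EuclideanGeometry.inversion_inversion 0 one_ne_zero

lemma finv_eq_zero_iff {n : ℕ} {x : Spc n} : finv x = 0 ↔ x = 0 := by
  simp [finv]

lemma rho_smul {n d : ℕ} (c : ℝ) (x : Spc n) : rho n d (c • x) = |c| * rho n d x := by
  unfold rho
  rw [← Real.sqrt_sq_eq_abs, ← Real.sqrt_mul (sq_nonneg c), Finset.mul_sum]
  congr 1
  refine Finset.sum_congr rfl fun i _ => ?_
  simp [mul_pow]

lemma rho_finv {n d : ℕ} (x : Spc n) : rho n d (finv x) = rho n d x / ‖x‖ ^ 2 := by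
  rw [finv, rho_smul, abs_of_nonneg (by positivity), inv_mul_eq_div]

lemma ne_zero_of_rho_pos {n d : ℕ} {x : Spc n} (hx : 0 < rho n d x) : x ≠ 0 := by
  rintro rfl
  simp [rho] at hx

lemma finv_mem_iff_of_smul_mem {n : ℕ} {S : Set (Spc n)}
    (hS : ∀ c : ℝ, 0 ≤ c → ∀ x ∈ S, c • x ∈ S) (x : Spc n) : finv x ∈ S ↔ x ∈ S := by
  have hmaps : ∀ y ∈ S, finv y ∈ S := fun y => hS _ (by positivity) y
  exact ⟨fun hx => finv_involutive x ▸ hmaps _ hx, hmaps x⟩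

lemma smul_mem_cone {n d : ℕ} (hn : 0 < n) {h c : ℝ} (hc : 0 ≤ c) {x : Spc n}
    (hx : x ∈ Cone n d hn h) : c • x ∈ Cone n d hn h := by
  simp only [Cone, Set.mem_ofPred_eq, rho_smul, abs_of_nonneg hc, PiLp.smul_apply,
    smul_eq_mul] at hx ⊢
  nlinarith

lemma smul_mem_rdplus {n d : ℕ} (hn : 0 < n) {c : ℝ} (hc : 0 ≤ c) {x : Spc n}
    (hx : x ∈ Rdplus n d hn) : c • x ∈ Rdplus n d hn := by
  obtain ⟨hx₀, hxd⟩ := hx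
  refine ⟨?_, fun i hi => ?_⟩
  · simpa using mul_nonneg hc hx₀
  · simp [hxd i hi]

lemma hasFDerivAt_finv {n : ℕ} {x : Spc n} (hx : x ≠ 0) :
    HasFDerivAt finv ((1 / ‖x‖) ^ 2 • ((ℝ ∙ x)ᗮ.reflection : Spc n →L[ℝ] Spc n)) x := by
  rw [finv_eq_inversion]
  simpa [dist_eq_norm] using EuclideanGeometry.hasFDerivAt_inversion (R := 1) hx

lemma inner_fderiv_finv {n : ℕ} {x : Spc n} (hx : x ≠ 0) (v w : Spc n) :
    ⟪fderiv ℝ finv x v, fderiv ℝ finv x w⟫ = ⟪v, w⟫ / (‖x‖ ^ 2) ^ 2 := by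
  have hx' : ‖x‖ ≠ 0 := norm_ne_zero_iff.2 hx
  rw [(hasFDerivAt_finv hx).fderiv]
  simp only [smul_apply, real_inner_smul_left, real_inner_smul_right]
  field_simp
  exact (ℝ ∙ x)ᗮ.reflection.inner_map_map v w

/-- the inversion is an involution of `ℝⁿ \ {0}`, preserves the solid cone
minus the origin and the singular half-subspace minus the origin (hence maps
`C_{d,h} \ ℝ^d₊` bijectively onto itself), and on `{ρ > 0}` it satisfies
`ρ(f(x)) = ρ(x)/|x|² > 0`, is differentiable, and is an isometry of the metric
`g = ρ⁻² δ`. -/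
theorem inversion_isometry_of_model_metric
    (n d : ℕ) (hn : 2 ≤ n) (h : ℝ) :
    (∀ x : Spc n, x ≠ 0 → finv (finv x) = x) ∧
    finv '' (Cone n d (by omega) h \ {0}) = Cone n d (by omega) h \ {0} ∧
    finv '' (Rdplus n d (by omega) \ {0}) = Rdplus n d (by omega) \ {0} ∧
    Set.BijOn finv (Cone n d (by omega) h \ Rdplus n d (by omega))
      (Cone n d (by omega) h \ Rdplus n d (by omega)) ∧
    (∀ x : Spc n, 0 < rho n d x →
      rho n d (finv x) = rho n d x / ‖x‖ ^ 2 ∧ 0 < rho n d (finv x) ∧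
      DifferentiableAt ℝ (finv (n := n)) x ∧
      ∀ v w : Spc n,
        (rho n d (finv x) ^ 2)⁻¹ *
            ⟪fderiv ℝ (finv (n := n)) x v, fderiv ℝ (finv (n := n)) x w⟫ =
          (rho n d x ^ 2)⁻¹ * ⟪v, w⟫) := by
  have hn₀ : 0 < n := by omega
  have finv_mem_cone_iff :=
    finv_mem_iff_of_smul_mem fun _ hc _ => smul_mem_cone (d := d) (h := h) hn₀ hc
  have finv_mem_rdplus_iff :=
    finv_mem_iff_of_smul_mem fun _ hc _ => smul_mem_rdplus (d := d) hn₀ hc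
  have bijOn_of_invariant {S : Set (Spc n)} (hS : ∀ x, finv x ∈ S ↔ x ∈ S) : BijOn finv S S :=
    (finv_involutive.toPerm _).bijOn hS
  refine ⟨fun x _ => finv_involutive x, (bijOn_of_invariant fun x => ?_).image_eq,
    (bijOn_of_invariant fun x => ?_).image_eq, bijOn_of_invariant fun x => ?_, fun x hρ => ?_⟩
  · simp only [mem_sdiff, finv_mem_cone_iff, mem_singleton_iff, finv_eq_zero_iff]
  · simp only [mem_sdiff, finv_mem_rdplus_iff, mem_singleton_iff, finv_eq_zero_iff]
  · simp only [mem_sdiff, finv_mem_cone_iff, finv_mem_rdplus_iff]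
  have hx := ne_zero_of_rho_pos hρ
  have hx' : ‖x‖ ≠ 0 := norm_ne_zero_iff.2 hx
  refine ⟨rho_finv x, by rw [rho_finv]; positivity, (hasFDerivAt_finv hx).differentiableAt,
    fun v w => ?_⟩
  rw [inner_fderiv_finv hx, rho_finv]
  field_simp
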